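/- For every Motzkin path p of length n, the number of permutations w of {1,…,n} with φ(w) = p equals wt(p) = ∏_{i : p_i ∈ {U,D}} h_i · ∏_{i : p_i = H} (2h_i + 1). -/

import Mathlib

/-- The three kinds of steps of a Motzkin path. -/
inductive Step : Type
  | U : Step
  | D : Step
  | H : Step
deriving DecidableEq
instance instFintypeStep : Fintype Step where
  elems := {Step.U, Step.D, Step.H}
  complete := fun x => by cases x <;> simp
/-- Number of indices `i` with `i < m` (i.e. in the prefix of length `m`,
with 0-based indexing) at which the word `p` has the letter `s`. -/
def countIn {n : ℕ} (p : Fin n → Step) (s : Step) (m : ℕ) : ℕ :=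
  (Finset.univ.filter (fun i : Fin n => (i : ℕ) < m ∧ p i = s)).card
/-- A word `p` of length `n` over `{U, D, H}` is a Motzkin path if every
prefix contains at least as many `U`'s as `D`'s and the whole word contains
equally many `U`'s and `D`'s. -/
def IsMotzkin {n : ℕ} (p : Fin n → Step) : Prop :=
  (∀ m ≤ n, countIn p Step.D m ≤ countIn p Step.U m) ∧
  countIn p Step.U n = countIn p Step.D n
/-- The map `φ` from permutations of `{1,…,n}` to words over `{U,D,H}`:
`p_i = U` if `w⁻¹(i) > i < w(i)`, `p_i = D` if `w⁻¹(i) < i > w(i)`,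
and `p_i = H` otherwise. -/
def phi {n : ℕ} (w : Equiv.Perm (Fin n)) : Fin n → Step := fun i =>
  if i < w.symm i ∧ i < w i then Step.U
  else if w.symm i < i ∧ w i < i then Step.D
  else Step.H
/-- The height `h_i` of step `i`: the number of `j ≤ i` with `p_j = U` minus
the number of `j ≤ i` with `p_j = D`, increased by `1` when `p_i = D`. -/
def heightAt {n : ℕ} (p : Fin n → Step) (i : Fin n) : ℕ :=
  ((Finset.univ.filter (fun j : Fin n => j ≤ i ∧ p j = Step.U)).card
    - (Finset.univ.filter (fun j : Fin n => j ≤ i ∧ p j = Step.D)).card)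
    + (if p i = Step.D then 1 else 0)
/-- The weight of a Motzkin path: the product over all steps of `h_i` for
`U` and `D` steps and of `2h_i + 1` for `H` steps. -/
def wt {n : ℕ} (p : Fin n → Step) : ℕ :=
  ∏ i : Fin n, (if p i = Step.H then 2 * heightAt p i + 1 else heightAt p i)

/-!
Record for every point `i` of a permutation `w` how `i` compares with `w i` and with `w⁻¹ i`.
`U` and `D` steps of `φ(w)` are the points where both comparisons are `<`, resp. `>`, while an
`H` step is a double rise (`w⁻¹ i < i < w i`), a double fall or a fixed point.

Once this refined profile is fixed, `w` amounts to its ascending part `i ↦ max i (w i)`,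
a bijection from `{i | i < w i}` onto `{j | w⁻¹ j < j}` moving every point up, together with its
descending part `i ↦ min i (w i)`. Assigning images to the ascending points from the largest
one down, the point `x` has `#{targets above x} - #{sources above x}` choices; for a Motzkin
path this difference is `#D - #U` after `x`, i.e. the height `h_x`. Dually for the descending
part. A profile is therefore realised by `∏ h_i` permutations, the product running over the
non-fixed points, and summing over the three refinements of every `H` step gives
`h + h + 1 = 2h + 1`.
-/

open Finset

section Matchings

variable {α : Type*} [LinearOrder α] [Fintype α] {X Z : Finset α} {f g : α → α} {a b : α}

-- Injectivity on `X` is not required: it follows from `X.image f = Z` once `#X = #Z`.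
def ascMatchings (X Z : Finset α) : Finset (α → α) :=
  {f | (∀ x ∉ X, f x = x) ∧ X.image f = Z ∧ ∀ x ∈ X, x < f x}

def descMatchings (X Z : Finset α) : Finset (α → α) :=
  {f | (∀ x ∉ X, f x = x) ∧ X.image f = Z ∧ ∀ x ∈ X, f x < x}

lemma mem_ascMatchings :
    f ∈ ascMatchings X Z ↔
      (∀ x ∉ X, f x = x) ∧ X.image f = Z ∧ ∀ x ∈ X, x < f x := by
  simp [ascMatchings]

lemma mem_descMatchings :
    f ∈ descMatchings X Z ↔
      (∀ x ∉ X, f x = x) ∧ X.image f = Z ∧ ∀ x ∈ X, f x < x := by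
  simp [descMatchings]

lemma ascMatchings_empty_left : ascMatchings (∅ : Finset α) ∅ = {id} := by
  ext f
  simp [mem_ascMatchings, funext_iff]

lemma update_mem_ascMatchings_insert (hg : g ∈ ascMatchings X Z) (ha : a ∉ X) (hab : a < b) :
    Function.update g a b ∈ ascMatchings (insert a X) (insert b Z) := by
  obtain ⟨hfix, himage, hlt⟩ := mem_ascMatchings.mp hg
  have hX : ∀ x ∈ X, Function.update g a b x = g x := fun x hx =>
    Function.update_of_ne (ne_of_mem_of_not_mem hx ha) _ _
  refine mem_ascMatchings.mpr ⟨fun x hx => ?_, ?_, fun x hx => ?_⟩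
  · rw [mem_insert, not_or] at hx
    rw [Function.update_of_ne hx.1, hfix x hx.2]
  · rw [image_insert, Function.update_self, image_congr hX, himage]
  · rcases mem_insert.mp hx with rfl | hx
    · simpa
    · simpa [hX x hx] using hlt x hx

lemma update_mem_ascMatchings_erase (hf : f ∈ ascMatchings (insert a X) Z) (ha : a ∉ X)
    (hcard : #(insert a X) = #Z) :
    Function.update f a a ∈ ascMatchings X (Z.erase (f a)) := by
  obtain ⟨hfix, himage, hlt⟩ := mem_ascMatchings.mp hf
  have hX : ∀ x ∈ X, Function.update f a a x = f x := fun x hx =>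
    Function.update_of_ne (ne_of_mem_of_not_mem hx ha) _ _
  rw [image_insert] at himage
  have hfa : f a ∉ X.image f := fun h => by
    have := card_image_le (s := X) (f := f)
    rw [← himage, insert_eq_of_mem h, card_insert_of_notMem ha] at hcard
    omega
  refine mem_ascMatchings.mpr ⟨fun x hx => ?_, ?_, fun x hx => ?_⟩
  · by_cases hxa : x = a
    · simp [hxa]
    · rw [Function.update_of_ne hxa, hfix x (by simp [hxa, hx])]
  · rw [image_congr hX, ← himage, erase_insert hfa]
  · rw [hX x hx]
    exact hlt x (mem_insert_of_mem hx)

lemma card_ascMatchings_insert_fiber (ha : a ∉ X) (hcard : #(insert a X) = #Z) (hb : b ∈ Z)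
    (hab : a < b) :
    #{f ∈ ascMatchings (insert a X) Z | f a = b} = #(ascMatchings X (Z.erase b)) := by
  refine card_nbij' (fun f => Function.update f a a) (fun g => Function.update g a b)
    (fun f hf => ?_) (fun g hg => ?_) (fun f hf => ?_) (fun g hg => ?_)
  · obtain ⟨hf', rfl⟩ := mem_filter.mp hf
    exact update_mem_ascMatchings_erase hf' ha hcard
  · refine mem_filter.mpr ⟨?_, by simp⟩
    simpa [insert_erase hb] using update_mem_ascMatchings_insert hg ha hab
  · obtain ⟨-, rfl⟩ := mem_filter.mp hf
    simp
  · simp only [Function.update_idem, Function.update_eq_self_iff]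
    exact ((mem_ascMatchings.mp hg).1 a ha).symm

theorem card_ascMatchings (X Z : Finset α) (h : #X = #Z) :
    #(ascMatchings X Z) = ∏ x ∈ X, (#{z ∈ Z | x < z} - #{y ∈ X | x < y}) := by
  induction X using Finset.induction_on_max generalizing Z with
  | empty =>
    rw [card_empty, eq_comm, card_eq_zero] at h
    simp [h, ascMatchings_empty_left]
  | insert a X hlt ih =>
    have ha : a ∉ X := fun haX => lt_irrefl a (hlt a haX)
    have hmaps : Set.MapsTo (fun f : α → α => f a) (ascMatchings (insert a X) Z)
        ({z ∈ Z | a < z} : Finset α) := by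
      intro f hf
      obtain ⟨-, himage, hup⟩ := mem_ascMatchings.mp hf
      exact mem_filter.mpr ⟨himage ▸ mem_image_of_mem f (mem_insert_self a X),
        hup a (mem_insert_self a X)⟩
    have hfiber : ∀ b ∈ {z ∈ Z | a < z}, #{f ∈ ascMatchings (insert a X) Z | f a = b} =
        ∏ x ∈ X, (#{z ∈ Z | x < z} - #{y ∈ insert a X | x < y}) := by
      intro b hb
      obtain ⟨hbZ, hab⟩ := mem_filter.mp hb
      rw [card_ascMatchings_insert_fiber ha h hbZ hab, ih]
      · -- every smaller source loses the target `b` and gains the source `a` above it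
        refine prod_congr rfl fun x hx => ?_
        have hxa := hlt x hx
        rw [filter_erase, card_erase_of_mem (by simp [hbZ, hxa.trans hab]), filter_insert,
          if_pos hxa, card_insert_of_notMem (by simp [ha]), Nat.sub_sub, add_comm]
      · rw [card_erase_of_mem hbZ, ← h, card_insert_of_notMem ha, Nat.add_sub_cancel]
    have hnone : {y ∈ insert a X | a < y} = ∅ := by
      simpa using fun y hy => (hlt y hy).le
    rw [card_eq_sum_card_fiberwise hmaps, sum_congr rfl hfiber, sum_const, smul_eq_mul,
      prod_insert ha, hnone, card_empty, Nat.sub_zero]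

theorem card_descMatchings (X Z : Finset α) (h : #X = #Z) :
    #(descMatchings X Z) = ∏ x ∈ X, (#{z ∈ Z | z < x} - #{y ∈ X | y < x}) :=
  card_ascMatchings (α := αᵒᵈ) X Z h

end Matchings

section Permutations

variable {α : Type*} [LinearOrder α] [Fintype α] {X Y Z W : Finset α} {f g : α → α}

lemma max_mem_ascMatchings_iff {w : α → α} :
    (fun i => max i (w i)) ∈ ascMatchings X Z ↔
      ({i | i < w i} : Finset α) = X ∧ X.image w = Z := by
  simp only [mem_ascMatchings, lt_max_iff, lt_irrefl, false_or, max_eq_left_iff, Finset.ext_iff,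
    mem_filter, mem_univ, true_and]
  constructor
  · rintro ⟨hfix, himage, hlt⟩
    refine ⟨fun i => ⟨fun h => by_contra fun hi => (hfix i hi).not_gt h, hlt i⟩,
      fun z => ?_⟩
    rw [← himage, image_congr fun x hx => max_eq_right (hlt x hx).le]
  · rintro ⟨hX, himage⟩
    refine ⟨fun i hi => not_lt.mp ((hX i).not.mpr hi), fun z => ?_, fun i hi => (hX i).mpr hi⟩
    rw [← himage, image_congr fun x hx => max_eq_right ((hX x).mpr hx).le]

lemma min_mem_descMatchings_iff {w : α → α} :
    (fun i => min i (w i)) ∈ descMatchings X Z ↔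
      ({i | w i < i} : Finset α) = X ∧ X.image w = Z :=
  max_mem_ascMatchings_iff (α := αᵒᵈ)

omit [Fintype α] in
lemma eq_of_max_eq_of_min_eq {a b c : α} (hmax : max a b = max a c) (hmin : min a b = min a c) :
    b = c := by
  grind

lemma exists_perm_max_eq_min_eq (hXY : Disjoint X Y) (hXYZW : X ∪ Y = Z ∪ W)
    (hf : f ∈ ascMatchings X Z) (hg : g ∈ descMatchings Y W) :
    ∃ w : Equiv.Perm α, (fun i => max i (w i)) = f ∧ (fun i => min i (w i)) = g := by
  obtain ⟨hfX, hfZ, hflt⟩ := mem_ascMatchings.mp hf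
  obtain ⟨hgY, hgW, hglt⟩ := mem_descMatchings.mp hg
  set v : α → α := fun i => if f i = i then g i else f i
  have hvX : ∀ x ∈ X, v x = f x := fun x hx => if_neg (hflt x hx).ne'
  have hvY : ∀ y ∈ Y, v y = g y := fun y hy => if_pos (hfX y (disjoint_right.mp hXY hy))
  have hv : ∀ i, max i (v i) = f i ∧ min i (v i) = g i := by
    intro i
    by_cases hX : i ∈ X
    · rw [hvX i hX, hgY i (disjoint_left.mp hXY hX)]
      exact ⟨max_eq_right (hflt i hX).le, min_eq_left (hflt i hX).le⟩
    by_cases hY : i ∈ Y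
    · rw [hvY i hY, hfX i hX]
      exact ⟨max_eq_left (hglt i hY).le, min_eq_right (hglt i hY).le⟩
    simp [v, hfX i hX, hgY i hY]
  have hsurj : v.Surjective := by
    intro j
    by_cases hZ : j ∈ Z
    · obtain ⟨x, hx, rfl⟩ := mem_image.mp (hfZ ▸ hZ)
      exact ⟨x, hvX x hx⟩
    by_cases hW : j ∈ W
    · obtain ⟨y, hy, rfl⟩ := mem_image.mp (hgW ▸ hW)
      exact ⟨y, hvY y hy⟩
    have hj : j ∉ X ∪ Y := by simp [hXYZW, hZ, hW]
    rw [mem_union, not_or] at hj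
    exact ⟨j, by simp [v, hfX j hj.1, hgY j hj.2]⟩
  exact ⟨Equiv.ofBijective v hsurj.bijective_of_finite, funext fun i => (hv i).1,
    funext fun i => (hv i).2⟩

lemma image_filter_lt_apply (w : Equiv.Perm α) :
    ({i | i < w i} : Finset α).image w = ({j | w.symm j < j} : Finset α) := by
  ext j
  simp only [mem_image, mem_filter, mem_univ, true_and]
  exact ⟨by rintro ⟨i, hi, rfl⟩; simpa using hi,
    fun hj => ⟨w.symm j, by simpa using hj, by simp⟩⟩

lemma image_filter_apply_lt (w : Equiv.Perm α) :
    ({i | w i < i} : Finset α).image w = ({j | j < w.symm j} : Finset α) :=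
  image_filter_lt_apply (α := αᵒᵈ) w

def profile (w : Equiv.Perm α) (i : α) : Ordering × Ordering :=
  (compare i (w i), compare i (w.symm i))

lemma Ordering.eq_iff_eq_lt_and_eq_gt {o o' : Ordering} :
    o = o' ↔ (o = .lt ↔ o' = .lt) ∧ (o = .gt ↔ o' = .gt) := by
  cases o <;> cases o' <;> decide

lemma profile_eq_iff {w : Equiv.Perm α} {τ : α → Ordering × Ordering} :
    profile w = τ ↔
      (fun i => max i (w i)) ∈ ascMatchings {i | (τ i).1 = .lt} {i | (τ i).2 = .gt} ∧
        (fun i => min i (w i)) ∈ descMatchings {i | (τ i).1 = .gt} {i | (τ i).2 = .lt} := by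
  have hiff : ∀ {P Q : α → Prop} [DecidablePred P] [DecidablePred Q],
      ({i | P i} : Finset α) = ({i | Q i} : Finset α) ↔ ∀ i, P i ↔ Q i := by
    intro P Q _ _
    simp [Finset.ext_iff]
  rw [max_mem_ascMatchings_iff, min_mem_descMatchings_iff]
  constructor
  · rintro rfl
    simp only [profile, compare_lt_iff_lt, compare_gt_iff_gt, image_filter_lt_apply,
      image_filter_apply_lt, and_self]
  · rintro ⟨⟨hX, hZ⟩, hY, hW⟩
    rw [← hX, image_filter_lt_apply] at hZ
    rw [← hY, image_filter_apply_lt] at hW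
    rw [hiff] at hX hY hZ hW
    funext i
    refine Prod.ext (Ordering.eq_iff_eq_lt_and_eq_gt.mpr ?_)
      (Ordering.eq_iff_eq_lt_and_eq_gt.mpr ?_) <;>
      simp only [profile, compare_lt_iff_lt, compare_gt_iff_gt]
    exacts [⟨hX i, hY i⟩, ⟨hW i, hZ i⟩]

theorem card_filter_profile_eq_mul (τ : α → Ordering × Ordering)
    (hτ : ∀ i, (τ i).1 = .eq ↔ (τ i).2 = .eq) :
    #{w | profile w = τ} =
      #(ascMatchings {i | (τ i).1 = .lt} {i | (τ i).2 = .gt}) *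
        #(descMatchings {i | (τ i).1 = .gt} {i | (τ i).2 = .lt}) := by
  have hXY : Disjoint (α := Finset α) {i | (τ i).1 = .lt} {i | (τ i).1 = .gt} :=
    disjoint_filter.mpr fun i _ h => by simp [h]
  have hXYZW : ({i | (τ i).1 = .lt} : Finset α) ∪ ({i | (τ i).1 = .gt} : Finset α) =
      ({i | (τ i).2 = .gt} : Finset α) ∪ ({i | (τ i).2 = .lt} : Finset α) := by
    ext i
    have := hτ i
    simp only [mem_union, mem_filter, mem_univ, true_and]
    cases h₁ : (τ i).1 <;> cases h₂ : (τ i).2 <;> simp_all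
  rw [← card_product]
  refine card_bij (fun w _ => (fun i => max i (w i), fun i => min i (w i))) ?_ ?_ ?_
  · intro w hw
    exact mem_product.mpr (profile_eq_iff.mp (mem_filter.mp hw).2)
  · intro w _ w' _ h
    simp only [Prod.mk.injEq, funext_iff] at h
    exact Equiv.ext fun i => eq_of_max_eq_of_min_eq (h.1 i) (h.2 i)
  · rintro ⟨f, g⟩ hfg
    obtain ⟨hf, hg⟩ := mem_product.mp hfg
    obtain ⟨w, rfl, rfl⟩ := exists_perm_max_eq_min_eq hXY hXYZW hf hg
    exact ⟨w, mem_filter.mpr ⟨mem_univ _, profile_eq_iff.mpr ⟨hf, hg⟩⟩, rfl⟩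

end Permutations

section Counting

variable {β : Type*} [LinearOrder β] [Fintype β] (P : β → Prop) [DecidablePred P]

lemma card_filter_le_add_card_filter_lt (x : β) :
    #{j | j ≤ x ∧ P j} + #{j | x < j ∧ P j} = #{j | P j} := by
  rw [← card_filter_add_card_filter_not (s := {j | P j}) (· ≤ x), filter_filter, filter_filter]
  simp only [not_le, and_comm]

lemma card_filter_le_eq_card_filter_lt_add (x : β) :
    #{j | j ≤ x ∧ P j} = #{j | j < x ∧ P j} + if P x then 1 else 0 := by
  have : ({j | j ≤ x ∧ P j} : Finset β) =
      ({j | j = x ∧ P j} : Finset β) ∪ ({j | j < x ∧ P j} : Finset β) := by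
    ext j; simp [le_iff_lt_or_eq, or_and_right, or_comm]
  rw [this, card_union_of_disjoint (disjoint_filter.mpr fun j _ h h' => h'.1.ne h.1), add_comm]
  congr 1
  split_ifs with h
  · refine card_eq_one.mpr ⟨x, ?_⟩
    ext j
    simp only [mem_filter, mem_univ, true_and, mem_singleton, and_iff_left_iff_imp]
    rintro rfl
    exact h
  · simp [h]

end Counting

def Step.profiles : Step → Finset (Ordering × Ordering)
  | .U => {(.lt, .lt)}
  | .D => {(.gt, .gt)}
  | .H => {(.lt, .gt), (.gt, .lt), (.eq, .eq)}

lemma Step.fst_eq_eq_iff_of_mem_profiles :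
    ∀ s : Step, ∀ r ∈ s.profiles, r.1 = .eq ↔ r.2 = .eq := by
  decide

lemma Step.ne_D_of_mem_profiles :
    ∀ s : Step, ∀ r ∈ s.profiles, r.1 = .lt → s ≠ .D := by
  decide

lemma Step.ne_U_of_mem_profiles :
    ∀ s : Step, ∀ r ∈ s.profiles, r.1 = .gt → s ≠ .U := by
  decide

lemma Step.balance_lt_of_mem_profiles : ∀ s : Step, ∀ r ∈ s.profiles,
    (if r.1 = .lt then 1 else 0) + (if s = .D then 1 else 0) =
      (if r.2 = .gt then 1 else 0) + (if s = .U then 1 else 0) := by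
  decide

lemma Step.balance_gt_of_mem_profiles : ∀ s : Step, ∀ r ∈ s.profiles,
    (if r.1 = .gt then 1 else 0) + (if s = .U then 1 else 0) =
      (if r.2 = .lt then 1 else 0) + (if s = .D then 1 else 0) := by
  decide

lemma Step.eq_of_mem_profiles :
    ∀ s s' : Step, ∀ r ∈ s.profiles, r ∈ s'.profiles → s = s' := by
  decide

lemma profile_mem_profiles_phi {n : ℕ} (w : Equiv.Perm (Fin n)) (i : Fin n) :
    profile w i ∈ (phi w i).profiles := by
  have hfix : compare i (w i) = .eq ↔ compare i (w.symm i) = .eq := by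
    rw [compare_eq_iff_eq, compare_eq_iff_eq, Equiv.eq_symm_apply, eq_comm]
  have h₁ : i < w i ↔ compare i (w i) = .lt := compare_lt_iff_lt.symm
  have h₂ : w i < i ↔ compare i (w i) = .gt := compare_gt_iff_gt.symm
  have h₃ : i < w.symm i ↔ compare i (w.symm i) = .lt := compare_lt_iff_lt.symm
  have h₄ : w.symm i < i ↔ compare i (w.symm i) = .gt := compare_gt_iff_gt.symm
  simp only [phi, profile, h₁, h₂, h₃, h₄]
  revert hfix
  generalize compare i (w i) = a
  generalize compare i (w.symm i) = b
  decide +revert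

lemma phi_apply_eq_iff {n : ℕ} (w : Equiv.Perm (Fin n)) (i : Fin n) (s : Step) :
    phi w i = s ↔ profile w i ∈ s.profiles :=
  ⟨fun h => h ▸ profile_mem_profiles_phi w i,
    Step.eq_of_mem_profiles _ _ _ (profile_mem_profiles_phi w i)⟩

section Balance

variable {ι : Type*} {p : ι → Step} {τ : ι → Ordering × Ordering}

lemma card_fst_lt_add_card_D (hτ : ∀ i, τ i ∈ (p i).profiles) (S : Finset ι) :
    #{i ∈ S | (τ i).1 = .lt} + #{i ∈ S | p i = .D} =
      #{i ∈ S | (τ i).2 = .gt} + #{i ∈ S | p i = .U} := by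
  simp only [card_filter, ← sum_add_distrib]
  exact sum_congr rfl fun i _ => Step.balance_lt_of_mem_profiles (p i) (τ i) (hτ i)

lemma card_fst_gt_add_card_U (hτ : ∀ i, τ i ∈ (p i).profiles) (S : Finset ι) :
    #{i ∈ S | (τ i).1 = .gt} + #{i ∈ S | p i = .U} =
      #{i ∈ S | (τ i).2 = .lt} + #{i ∈ S | p i = .D} := by
  simp only [card_filter, ← sum_add_distrib]
  exact sum_congr rfl fun i _ => Step.balance_gt_of_mem_profiles (p i) (τ i) (hτ i)

end Balance

section Heights

variable {n : ℕ} {p : Fin n → Step} {τ : Fin n → Ordering × Ordering}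

lemma countIn_val_add_one (p : Fin n → Step) (s : Step) (i : Fin n) :
    countIn p s (i + 1 : ℕ) = #{j | j ≤ i ∧ p j = s} := by
  unfold countIn
  congr 1
  refine filter_congr fun j _ => ?_
  rw [Fin.le_iff_val_le_val, Nat.lt_succ_iff]

lemma IsMotzkin.card_D_le_card_U (hp : IsMotzkin p) (i : Fin n) :
    #{j | j ≤ i ∧ p j = .D} ≤ #{j | j ≤ i ∧ p j = .U} := by
  simpa only [countIn_val_add_one] using hp.1 (i + 1 : ℕ) i.isLt

lemma IsMotzkin.card_U_eq_card_D (hp : IsMotzkin p) : #{j | p j = .U} = #{j | p j = .D} := by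
  simpa [countIn] using hp.2

lemma IsMotzkin.heightAt_add_card_le (hp : IsMotzkin p) (i : Fin n) (hi : p i ≠ .D) :
    heightAt p i + #{j | j ≤ i ∧ p j = .D} = #{j | j ≤ i ∧ p j = .U} := by
  have := hp.card_D_le_card_U i
  rw [heightAt, if_neg hi]
  omega

lemma IsMotzkin.heightAt_add_card_lt (hp : IsMotzkin p) (i : Fin n) (hi : p i ≠ .U) :
    heightAt p i + #{j | j < i ∧ p j = .D} = #{j | j < i ∧ p j = .U} := by
  have := hp.card_D_le_card_U i
  have hU := card_filter_le_eq_card_filter_lt_add (p · = .U) i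
  have hD := card_filter_le_eq_card_filter_lt_add (p · = .D) i
  rw [if_neg hi] at hU
  rw [heightAt]
  split_ifs at hD ⊢ <;> omega

lemma IsMotzkin.sub_eq_heightAt_of_fst_lt (hp : IsMotzkin p) (hτ : ∀ i, τ i ∈ (p i).profiles)
    {x : Fin n} (hx : (τ x).1 = .lt) :
    #{z ∈ {i | (τ i).2 = .gt} | x < z} - #{y ∈ {i | (τ i).1 = .lt} | x < y} =
      heightAt p x := by
  have hbal := card_fst_lt_add_card_D hτ {j | x < j}
  have hU := card_filter_le_add_card_filter_lt (p · = .U) x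
  have hD := card_filter_le_add_card_filter_lt (p · = .D) x
  have hh := hp.heightAt_add_card_le x (Step.ne_D_of_mem_profiles _ _ (hτ x) hx)
  have := hp.card_U_eq_card_D
  rw [filter_comm (fun i => (τ i).2 = .gt), filter_comm (fun i => (τ i).1 = .lt)]
  simp only [filter_filter] at hbal ⊢
  omega

lemma IsMotzkin.sub_eq_heightAt_of_fst_gt (hp : IsMotzkin p) (hτ : ∀ i, τ i ∈ (p i).profiles)
    {y : Fin n} (hy : (τ y).1 = .gt) :
    #{z ∈ {i | (τ i).2 = .lt} | z < y} - #{x ∈ {i | (τ i).1 = .gt} | x < y} =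
      heightAt p y := by
  have hbal := card_fst_gt_add_card_U hτ {j | j < y}
  have hh := hp.heightAt_add_card_lt y (Step.ne_U_of_mem_profiles _ _ (hτ y) hy)
  rw [filter_comm (fun i => (τ i).2 = .lt), filter_comm (fun i => (τ i).1 = .gt)]
  simp only [filter_filter] at hbal ⊢
  omega

lemma IsMotzkin.card_filter_profile_eq (hp : IsMotzkin p) (hτ : ∀ i, τ i ∈ (p i).profiles) :
    #{w | profile w = τ} = ∏ i, if (τ i).1 = .eq then 1 else heightAt p i := by
  have hXZ : #{i | (τ i).1 = .lt} = #{i | (τ i).2 = .gt} := by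
    have := card_fst_lt_add_card_D hτ univ
    have := hp.card_U_eq_card_D
    omega
  have hYW : #{i | (τ i).1 = .gt} = #{i | (τ i).2 = .lt} := by
    have := card_fst_gt_add_card_U hτ univ
    have := hp.card_U_eq_card_D
    omega
  rw [card_filter_profile_eq_mul τ fun i => Step.fst_eq_eq_iff_of_mem_profiles _ _ (hτ i),
    card_ascMatchings _ _ hXZ, card_descMatchings _ _ hYW,
    prod_congr rfl fun x hx => hp.sub_eq_heightAt_of_fst_lt hτ (mem_filter.mp hx).2,
    prod_congr rfl fun y hy => hp.sub_eq_heightAt_of_fst_gt hτ (mem_filter.mp hy).2,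
    prod_filter, prod_filter, ← prod_mul_distrib]
  refine prod_congr rfl fun i _ => ?_
  cases (τ i).1 <;> simp

end Heights

/-- For every Motzkin path `p` of length `n`, the number of permutations
`w` of `{1,…,n}` with `φ(w) = p` equals the weight `wt(p)`. -/
theorem card_phi_preimage_eq_wt (n : ℕ) (p : Fin n → Step) (hp : IsMotzkin p) :
    (Finset.univ.filter (fun w : Equiv.Perm (Fin n) => phi w = p)).card = wt p := by
  have hphi : ∀ w : Equiv.Perm (Fin n),
      phi w = p ↔ profile w ∈ Fintype.piFinset fun i => (p i).profiles := fun w => by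
    simp only [Fintype.mem_piFinset, funext_iff, phi_apply_eq_iff]
  have hmaps : Set.MapsTo profile ({w | phi w = p} : Finset _)
      (Fintype.piFinset fun i => (p i).profiles) := fun w hw => (hphi w).mp (by simpa using hw)
  have hfiber : ∀ τ ∈ Fintype.piFinset fun i => (p i).profiles,
      #{w ∈ {w | phi w = p} | profile w = τ} =
        ∏ i, if (τ i).1 = .eq then 1 else heightAt p i := by
    intro τ hτ
    rw [filter_filter, ← hp.card_filter_profile_eq (Fintype.mem_piFinset.mp hτ)]
    refine congrArg card (filter_congr fun w _ => ?_)
    exact and_iff_right_of_imp fun h => (hphi w).mpr (h ▸ hτ)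
  rw [card_eq_sum_card_fiberwise hmaps, sum_congr rfl hfiber, wt,
    ← prod_univ_sum (fun i => (p i).profiles) fun i r => if r.1 = .eq then 1 else heightAt p i]
  refine prod_congr rfl fun i _ => ?_
  cases p i <;> simp [Step.profiles]
  ring
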